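/- Let q ≥ 3 and n ≥ 3. For every w ∈ CBFS_q(n) = A_q(n) ∪ B_q(n) ∪ C_q(n) and every w' ∈ C_q(n), no nonempty proper prefix of w is equal to a suffix of w'. -/

import Mathlib

/-- Value of a letter: 1 ↦ +1, 0 ↦ -1, other letters ↦ 0. -/
def mval (a : ℕ) : ℤ := if a = 1 then 1 else if a = 0 then -1 else 0

/-- Value-sum of a word. -/
def vsum (w : List ℕ) : ℤ := (w.map mval).sum

/-- A (q-2)-colored Motzkin word over the alphabet Z_q = {0,...,q-1}:
all letters < q, every prefix has nonnegative value-sum, total value-sum 0. -/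
def IsMotzkinWord (q : ℕ) (w : List ℕ) : Prop :=
  (∀ a ∈ w, a < q) ∧ (∀ u, u <+: w → 0 ≤ vsum u) ∧ vsum w = 0

/-- The set 𝓜_{q-2}(n) of (q-2)-colored Motzkin words of length n. -/
def MotzkinSet (q n : ℕ) : Set (List ℕ) := {w | w.length = n ∧ IsMotzkinWord q w}

/-- M_{q-2}(n), the number of (q-2)-colored Motzkin words of length n. -/
noncomputable def Mnum (q n : ℕ) : ℕ := (MotzkinSet q n).ncard

/-- The set Ê_{q-2}(n) of elevated (q-2)-colored Motzkin words of length n: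
words 1α0 with α ∈ 𝓜_{q-2}(n-2). -/
def ElevatedSet (q n : ℕ) : Set (List ℕ) :=
  {w | w.length = n ∧ ∃ α ∈ MotzkinSet q (n - 2), w = 1 :: (α ++ [0])}

/-- The set A_q(n). -/
def SetA (q n : ℕ) : Set (List ℕ) :=
  {w | ∃ i ≤ n / 2, ∃ α ∈ MotzkinSet q i, ∃ β ∈ ElevatedSet q (n - i), w = α ++ β} \
    {w | ∃ α ∈ ElevatedSet q (n / 2), ∃ β ∈ ElevatedSet q (n / 2), w = α ++ β}

/-- The set B_q(n). -/
def SetB (q n : ℕ) : Set (List ℕ) :=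
  {w | ∃ i ≤ n / 2 - 1, ∃ α ∈ MotzkinSet q i, ∃ β ∈ ElevatedSet q (n - i - 1),
    w = 1 :: (α ++ β)}

/-- The set C_q(n): words γ0 with γ a (q-2)-colored Motzkin word of length n-1
having no factor which is an elevated Motzkin word of length j ≥ ⌈n/2⌉. -/
def SetC (q n : ℕ) : Set (List ℕ) :=
  {w | ∃ γ ∈ MotzkinSet q (n - 1),
    (∀ j, (n + 1) / 2 ≤ j → ∀ β ∈ ElevatedSet q j, ¬ β <:+: γ) ∧ w = γ ++ [0]}

/-- The cross-bifix-free candidate set CBFS_q(n). -/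
def CBFS (q n : ℕ) : Set (List ℕ) := SetA q n ∪ SetB q n ∪ SetC q n

/-- A word is bifix-free if no nonempty proper prefix of it is also a suffix of it. -/
def BifixFree (w : List ℕ) : Prop :=
  ∀ u, u <+: w → u ≠ [] → u.length < w.length → ¬ u <:+ w

/-- BF_q(n): the set of bifix-free words of length n over Z_q. -/
def BF (q n : ℕ) : Set (List ℕ) := {w | w.length = n ∧ (∀ a ∈ w, a < q) ∧ BifixFree w}

/-- F_{k,q}(n): the number of words of length n over Z_q avoiding k consecutive 0's. -/
noncomputable def Fcount (k q n : ℕ) : ℕ :=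
  {w : List ℕ | w.length = n ∧ (∀ a ∈ w, a < q) ∧ ¬ List.replicate k 0 <:+: w}.ncard

/-- The set S_{k,q}(n) of Bajic--Stojanovic--Chee--Kiah type words: words s of length n
over Z_q with s₁ = ⋯ = s_k = 0, s_{k+1} ≠ 0, s_n ≠ 0, and such that the subword
s_{k+2} ⋯ s_{n-1} contains no k consecutive 0's. -/
def SetS (q k n : ℕ) : Set (List ℕ) :=
  {s | s.length = n ∧ (∀ a ∈ s, a < q) ∧ s.take k = List.replicate k 0 ∧
    s.getD k 0 ≠ 0 ∧ s.getLast? ≠ some 0 ∧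
    ¬ List.replicate k 0 <:+: (s.drop (k + 1)).take (n - k - 2)}

/-!
Every proper prefix of a word of CBFS_q(n) has nonnegative value-sum: the words of A_q(n) and
B_q(n) are built from Motzkin and elevated words, all of whose prefixes have nonnegative value,
and a proper prefix of γ0 ∈ C_q(n) is a prefix of the Motzkin word γ. On the other hand a
nonempty suffix of γ0 has value at most −1, since every suffix of the Motzkin word γ has
nonpositive value and the final letter 0 contributes −1.
-/

lemma List.prefix_append_or {α : Type*} {u a b : List α} (h : u <+: a ++ b) :
    u <+: a ∨ ∃ v, v <+: b ∧ u = a ++ v := by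
  refine (List.prefix_or_prefix_of_prefix h (a.prefix_append b)).imp id ?_
  rintro ⟨v, rfl⟩
  exact ⟨v, (List.prefix_append_right_inj a).1 h, rfl⟩

lemma vsum_append (a b : List ℕ) : vsum (a ++ b) = vsum a + vsum b := by
  simp [vsum]

lemma vsum_cons (a : ℕ) (w : List ℕ) : vsum (a :: w) = mval a + vsum w := by
  simp [vsum]

def PrefixNonneg (w : List ℕ) : Prop := ∀ u, u <+: w → 0 ≤ vsum u

lemma PrefixNonneg.append {a b : List ℕ} (ha : PrefixNonneg a) (ha0 : vsum a = 0)
    (hb : PrefixNonneg b) : PrefixNonneg (a ++ b) := by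
  intro u hu
  rcases List.prefix_append_or hu with hua | ⟨v, hvb, rfl⟩
  · exact ha u hua
  · rw [vsum_append, ha0, zero_add]
    exact hb v hvb

lemma PrefixNonneg.cons_one {w : List ℕ} (h : PrefixNonneg w) : PrefixNonneg (1 :: w) := by
  intro u hu
  rcases List.prefix_cons_iff.1 hu with rfl | ⟨t, rfl, ht⟩
  · simp [vsum]
  · rw [vsum_cons, mval, if_pos rfl]
    linarith [h t ht]

lemma prefixNonneg_of_mem_elevatedSet {q n : ℕ} {w : List ℕ} (hw : w ∈ ElevatedSet q n) :
    PrefixNonneg w := by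
  obtain ⟨-, α, ⟨-, -, hα, hα0⟩, rfl⟩ := hw
  intro u hu
  rw [← List.cons_append] at hu
  rcases List.prefix_concat_iff.1 hu with rfl | hu
  · rw [List.cons_append, vsum_cons, vsum_append, hα0]
    simp [vsum, mval]
  · exact PrefixNonneg.cons_one hα u hu

lemma prefixNonneg_of_mem_setA {q n : ℕ} {w : List ℕ} (hw : w ∈ SetA q n) :
    PrefixNonneg w := by
  obtain ⟨i, -, α, ⟨-, -, hα, hα0⟩, β, hβ, rfl⟩ := hw.1
  exact PrefixNonneg.append hα hα0 (prefixNonneg_of_mem_elevatedSet hβ)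

lemma prefixNonneg_of_mem_setB {q n : ℕ} {w : List ℕ} (hw : w ∈ SetB q n) :
    PrefixNonneg w := by
  obtain ⟨i, -, α, ⟨-, -, hα, hα0⟩, β, hβ, rfl⟩ := hw
  exact (PrefixNonneg.append hα hα0 (prefixNonneg_of_mem_elevatedSet hβ)).cons_one

lemma vsum_nonneg_of_prefix_of_mem_setC {q n : ℕ} {w u : List ℕ} (hw : w ∈ SetC q n)
    (hu : u <+: w) (hlt : u.length < w.length) : 0 ≤ vsum u := by
  obtain ⟨γ, ⟨-, -, hγ, -⟩, -, rfl⟩ := hw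
  rcases List.prefix_concat_iff.1 hu with rfl | hu
  · exact absurd hlt (lt_irrefl _)
  · exact hγ u hu

lemma vsum_nonneg_of_prefix_of_mem_cbfs {q n : ℕ} {w u : List ℕ} (hw : w ∈ CBFS q n)
    (hu : u <+: w) (hlt : u.length < w.length) : 0 ≤ vsum u := by
  rcases hw with (hA | hB) | hC
  · exact prefixNonneg_of_mem_setA hA u hu
  · exact prefixNonneg_of_mem_setB hB u hu
  · exact vsum_nonneg_of_prefix_of_mem_setC hC hu hlt

lemma IsMotzkinWord.vsum_nonpos_of_suffix {q : ℕ} {γ t : List ℕ} (hγ : IsMotzkinWord q γ)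
    (ht : t <:+ γ) : vsum t ≤ 0 := by
  obtain ⟨s, rfl⟩ := ht
  have hs := hγ.2.1 s (List.prefix_append s t)
  have hst := hγ.2.2
  rw [vsum_append] at hst
  linarith

lemma vsum_neg_of_suffix_of_mem_setC {q n : ℕ} {w u : List ℕ} (hw : w ∈ SetC q n)
    (hu : u <:+ w) (hne : u ≠ []) : vsum u < 0 := by
  obtain ⟨γ, ⟨-, hγ⟩, -, rfl⟩ := hw
  rcases List.suffix_concat_iff.1 hu with rfl | ⟨t, rfl, ht⟩
  · exact (hne rfl).elim
  · rw [vsum_append]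
    have h0 : vsum [0] = -1 := by simp [vsum, mval]
    linarith [hγ.vsum_nonpos_of_suffix ht]

theorem cbfs_vs_setC_no_cross_bifix_general (q n : ℕ)
    (w w' : List ℕ) (hw : w ∈ CBFS q n) (hw' : w' ∈ SetC q n) :
    ∀ u, u <+: w → u ≠ [] → u.length < w.length → ¬ u <:+ w' := by
  intro u hpre hne hlen hsuf
  have hpos := vsum_nonneg_of_prefix_of_mem_cbfs hw hpre hlen
  have hneg := vsum_neg_of_suffix_of_mem_setC hw' hsuf hne
  exact hneg.not_ge hpos

/-- For w ∈ CBFS_q(n) and w' ∈ C_q(n), no nonempty proper prefix of w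
equals a suffix of w'. -/
theorem cbfs_vs_setC_no_cross_bifix (q n : ℕ) (hq : 3 ≤ q) (hn : 3 ≤ n)
    (w w' : List ℕ) (hw : w ∈ CBFS q n) (hw' : w' ∈ SetC q n) :
    ∀ u, u <+: w → u ≠ [] → u.length < w.length → ¬ u <:+ w' :=
  cbfs_vs_setC_no_cross_bifix_general q n w w' hw hw'
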